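/- Let K be a compact metric space and ξ ≥ 1 a countable ordinal. The set 𝔅₁^ξ(K) = {f : K → ℝ : β(f) ≤ ω^ξ} is a vector subspace of ℝ^K that is closed under uniform convergence. -/

import Mathlib

open Filter Topology Set Ordinal

noncomputable section

/-- One step of the oscillation derivation of `A` with respect to `f` and `ε`. -/
def oscStep {K : Type*} [TopologicalSpace K] (f : K → ℝ) (ε : ℝ) (A : Set K) : Set K :=
  {x ∈ A | ∀ U : Set K, IsOpen U → x ∈ U →
    ∃ x₁ ∈ U ∩ A, ∃ x₂ ∈ U ∩ A, ε ≤ |f x₁ - f x₂|}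

/-- The transfinite oscillation derivatives `H^α(f, ε)`. -/
def oscDeriv {K : Type*} [TopologicalSpace K] (f : K → ℝ) (ε : ℝ) (H : Set K) :
    Ordinal → Set K := fun α =>
  Ordinal.limitRecOn α H (fun _ ih => oscStep f ε ih)
    (fun _ _ ih => ⋂ (β : Ordinal) (h : _), ih β h)

/-- One step of the convergence derivation of `A` for a sequence `f`. -/
def seqStep {K : Type*} [TopologicalSpace K] (f : ℕ → K → ℝ) (ε : ℝ) (A : Set K) : Set K :=
  {x ∈ A | ∀ U : Set K, IsOpen U → x ∈ U → ∀ m : ℕ,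
    ∃ n₁ n₂ : ℕ, m < n₂ ∧ n₂ < n₁ ∧ ∃ x' ∈ U ∩ A, ε ≤ |f n₁ x' - f n₂ x'|}

/-- The transfinite convergence derivatives `H^α((fₙ), ε)`. -/
def seqDeriv {K : Type*} [TopologicalSpace K] (f : ℕ → K → ℝ) (ε : ℝ) (H : Set K) :
    Ordinal → Set K := fun α =>
  Ordinal.limitRecOn α H (fun _ ih => seqStep f ε ih)
    (fun _ _ ih => ⋂ (β : Ordinal) (h : _), ih β h)

open Classical in
/-- The least ordinal at which the family `S` is empty, and `ω₁` if there is none. -/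
def emptyIndex {K : Type*} (S : Ordinal → Set K) : Ordinal :=
  if _ : ∃ α, S α = ∅ then sInf {α | S α = ∅} else (Cardinal.aleph 1).ord

/-- The oscillation index `β_H(f, ε)`. -/
def betaEpsOn {K : Type*} [TopologicalSpace K] (f : K → ℝ) (ε : ℝ) (H : Set K) : Ordinal :=
  emptyIndex (oscDeriv f ε H)

/-- The oscillation index `β_H(f)`. -/
def betaOn {K : Type*} [TopologicalSpace K] (f : K → ℝ) (H : Set K) : Ordinal :=
  ⨆ ε : {e : ℝ // 0 < e}, betaEpsOn f ε.1 H

/-- The oscillation index `β(f)` over the whole space. -/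
def beta {K : Type*} [TopologicalSpace K] (f : K → ℝ) : Ordinal :=
  betaOn f Set.univ

/-- The convergence index `γ_H((fₙ), ε)`. -/
def gammaEpsOn {K : Type*} [TopologicalSpace K] (f : ℕ → K → ℝ) (ε : ℝ) (H : Set K) : Ordinal :=
  emptyIndex (seqDeriv f ε H)

/-- The convergence index `γ_H((fₙ))`. -/
def gammaOn {K : Type*} [TopologicalSpace K] (f : ℕ → K → ℝ) (H : Set K) : Ordinal :=
  ⨆ ε : {e : ℝ // 0 < e}, gammaEpsOn f ε.1 H

/-- The convergence index `γ((fₙ))` over the whole space. -/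
def gamma {K : Type*} [TopologicalSpace K] (f : ℕ → K → ℝ) : Ordinal :=
  gammaOn f Set.univ

/-- A function is of Baire class one if it is a pointwise limit of continuous functions. -/
def BaireOne {K : Type*} [TopologicalSpace K] (f : K → ℝ) : Prop :=
  ∃ F : ℕ → K → ℝ, (∀ n, Continuous (F n)) ∧
    ∀ x, Tendsto (fun n => F n x) atTop (nhds (f x))

/-- `f` is of Baire class one on the subspace `F`. -/
def BaireOneOn {K : Type*} [TopologicalSpace K] (f : K → ℝ) (F : Set K) : Prop :=
  ∃ g : ℕ → F → ℝ, (∀ n, Continuous (g n)) ∧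
    ∀ x : F, Tendsto (fun n => g n x) atTop (nhds (f x))

/-- `g` is a convex block combination of `f`. -/
def ConvexBlockOf {K : Type*} (g f : ℕ → K → ℝ) : Prop :=
  ∃ a : ℕ → ℝ, ∃ p : ℕ → ℕ, (∀ k, 0 ≤ a k) ∧ StrictMono p ∧ p 0 = 0 ∧
    (∀ n, ∑ k ∈ Finset.Ioc (p n) (p (n + 1)), a k = 1) ∧
    ∀ n x, g n x = ∑ k ∈ Finset.Ioc (p n) (p (n + 1)), a k * f k x

end

section NaddAux
universe un

/-- Natural (Hessenberg) addition of ordinals. -/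
noncomputable def nadd : Ordinal.{un} → Ordinal.{un} → Ordinal.{un}
  | a, b =>
    max (blsub.{un, un} a fun a' _ => nadd a' b) (blsub.{un, un} b fun b' _ => nadd a b')
termination_by a b => (a, b)

infixl:65 " ♯ " => nadd

lemma nadd_def (a b : Ordinal.{un}) :
    a ♯ b = max (blsub.{un, un} a fun a' _ => a' ♯ b) (blsub.{un, un} b fun b' _ => a ♯ b') := by
  rw [nadd]

lemma nadd_le_iff {a b c : Ordinal.{un}} :
    a ♯ b ≤ c ↔ (∀ a' < a, a' ♯ b < c) ∧ ∀ b' < b, a ♯ b' < c := by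
  rw [nadd_def, max_le_iff, blsub_le_iff, blsub_le_iff]

lemma nadd_lt_nadd_left {b c : Ordinal.{un}} (h : b < c) (a : Ordinal.{un}) : a ♯ b < a ♯ c := by
  rw [nadd_def a c]
  exact lt_max_of_lt_right (lt_blsub.{un, un} (fun b' _ => a ♯ b') b h)

lemma nadd_lt_nadd_right {b c : Ordinal.{un}} (h : b < c) (a : Ordinal.{un}) : b ♯ a < c ♯ a := by
  rw [nadd_def c a]
  exact lt_max_of_lt_left (lt_blsub.{un, un} (fun b' _ => b' ♯ a) b h)

lemma nadd_le_nadd_left {b c : Ordinal.{un}} (h : b ≤ c) (a : Ordinal.{un}) : a ♯ b ≤ a ♯ c := by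
  rcases h.lt_or_eq with h | rfl
  · exact (nadd_lt_nadd_left h a).le
  · exact le_rfl

lemma nadd_le_nadd_right {b c : Ordinal.{un}} (h : b ≤ c) (a : Ordinal.{un}) : b ♯ a ≤ c ♯ a := by
  rcases h.lt_or_eq with h | rfl
  · exact (nadd_lt_nadd_right h a).le
  · exact le_rfl

lemma nadd_le_nadd {a b c d : Ordinal.{un}} (h₁ : a ≤ b) (h₂ : c ≤ d) : a ♯ c ≤ b ♯ d :=
  (nadd_le_nadd_right h₁ c).trans (nadd_le_nadd_left h₂ b)

lemma nadd_comm (a b : Ordinal.{un}) : a ♯ b = b ♯ a := by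
  rw [nadd_def, nadd_def b a, max_comm]
  congr 2
  · funext a' ha'
    exact nadd_comm a a'
  · funext b' hb'
    exact nadd_comm b' b
termination_by (a, b)

lemma nadd_zero (a : Ordinal.{un}) : a ♯ 0 = a := by
  induction a using Ordinal.induction with
  | _ a IH =>
    apply le_antisymm
    · rw [nadd_le_iff]
      refine ⟨fun a' ha' => by rw [IH a' ha']; exact ha', fun b' hb' => ?_⟩
      exact absurd hb' (not_lt_of_ge (zero_le (a := b')))
    · refine le_of_forall_lt fun c hc => ?_
      rw [← IH c hc]
      exact nadd_lt_nadd_right hc 0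

lemma nadd_succ (a b : Ordinal.{un}) : a ♯ Order.succ b = Order.succ (a ♯ b) := by
  induction a using Ordinal.induction with
  | _ a IH =>
    apply le_antisymm
    · rw [nadd_le_iff]
      refine ⟨fun a' ha' => ?_, fun b' hb' => ?_⟩
      · rw [IH a' ha']
        exact Order.succ_lt_succ (nadd_lt_nadd_right ha' b)
      · exact Order.lt_succ_iff.2 (nadd_le_nadd_left (Order.lt_succ_iff.1 hb') a)
    · exact Order.succ_le_of_lt (nadd_lt_nadd_left (Order.lt_succ b) a)

lemma succ_nadd (a b : Ordinal.{un}) : Order.succ a ♯ b = Order.succ (a ♯ b) := by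
  rw [nadd_comm, nadd_succ, nadd_comm]

end NaddAux


noncomputable section Auxiliary
open scoped Cardinal
set_option linter.unusedSectionVars false
set_option maxHeartbeats 1000000

section TopAux
variable {K : Type*} [TopologicalSpace K] {f g : K → ℝ} {ε ε' : ℝ} {H H' A B : Set K}


set_option linter.unusedSectionVars false

variable {K : Type*} [TopologicalSpace K] {f g : K → ℝ} {ε ε' : ℝ} {H H' A B : Set K}

lemma oscDeriv_zero (f : K → ℝ) (ε : ℝ) (H : Set K) : oscDeriv f ε H 0 = H :=
  Ordinal.limitRecOn_zero _ _ _

lemma oscDeriv_succ (f : K → ℝ) (ε : ℝ) (H : Set K) (α : Ordinal) :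
    oscDeriv f ε H (Order.succ α) = oscStep f ε (oscDeriv f ε H α) :=
  Ordinal.limitRecOn_succ _ _ _ _

lemma oscDeriv_limit (f : K → ℝ) (ε : ℝ) (H : Set K) {α : Ordinal} (hα : Order.IsSuccLimit α) :
    oscDeriv f ε H α = ⋂ (β : Ordinal) (_ : β < α), oscDeriv f ε H β :=
  Ordinal.limitRecOn_limit _ _ _ _ hα

lemma oscStep_subset : oscStep f ε A ⊆ A := fun _ hx => hx.1

lemma oscStep_mono (hfg : ∀ x y : K, ε ≤ |f x - f y| → ε' ≤ |g x - g y|)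
    (hAB : A ⊆ B) : oscStep f ε A ⊆ oscStep g ε' B := by
  rintro x ⟨hxA, hx⟩
  refine ⟨hAB hxA, fun U hU hxU => ?_⟩
  obtain ⟨y₁, hy₁, y₂, hy₂, hy⟩ := hx U hU hxU
  exact ⟨y₁, ⟨hy₁.1, hAB hy₁.2⟩, y₂, ⟨hy₂.1, hAB hy₂.2⟩, hfg _ _ hy⟩

lemma oscDeriv_mono (hfg : ∀ x y : K, ε ≤ |f x - f y| → ε' ≤ |g x - g y|)
    (hH : H ⊆ H') (α : Ordinal) :
    oscDeriv f ε H α ⊆ oscDeriv g ε' H' α := by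
  induction α using Ordinal.limitRecOn with
  | zero => rw [oscDeriv_zero, oscDeriv_zero]; exact hH
  | add_one α ih => rw [Ordinal.add_one_eq_succ, oscDeriv_succ, oscDeriv_succ]; exact oscStep_mono hfg ih
  | limit α hα ih =>
      rw [oscDeriv_limit _ _ _ hα, oscDeriv_limit _ _ _ hα]
      exact Set.iInter₂_mono fun β hβ => ih β hβ

lemma oscDeriv_subset (f : K → ℝ) (ε : ℝ) (H : Set K) (α : Ordinal) :
    oscDeriv f ε H α ⊆ H := by
  induction α using Ordinal.limitRecOn with
  | zero => rw [oscDeriv_zero]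
  | add_one α ih => rw [Ordinal.add_one_eq_succ, oscDeriv_succ]; exact oscStep_subset.trans ih
  | limit α hα ih =>
      rw [oscDeriv_limit _ _ _ hα]
      intro x hx
      have h0 := Set.mem_iInter₂.1 hx 0 hα.pos
      rwa [oscDeriv_zero] at h0

lemma oscDeriv_anti (f : K → ℝ) (ε : ℝ) (H : Set K) :
    ∀ {β α : Ordinal}, α ≤ β → oscDeriv f ε H β ⊆ oscDeriv f ε H α := by
  intro β
  induction β using Ordinal.limitRecOn with
  | zero => intro α hα; rw [nonpos_iff_eq_zero.1 hα]
  | add_one β ih =>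
      rw [Ordinal.add_one_eq_succ]
      intro α hα
      rcases (Order.le_succ_iff_eq_or_le.1 hα) with rfl | hα
      · rfl
      · rw [oscDeriv_succ]; exact oscStep_subset.trans (ih hα)
  | limit β hβ ih =>
      intro α hα
      rcases eq_or_lt_of_le hα with rfl | hα
      · rfl
      · rw [oscDeriv_limit _ _ _ hβ]
        exact Set.biInter_subset_of_mem hα

lemma oscDeriv_add (f : K → ℝ) (ε : ℝ) (H : Set K) (α : Ordinal) :
    ∀ β : Ordinal, oscDeriv f ε H (α + β) = oscDeriv f ε (oscDeriv f ε H α) β := by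
  intro β
  induction β using Ordinal.limitRecOn with
  | zero => rw [add_zero, oscDeriv_zero]
  | add_one β ih => rw [Ordinal.add_one_eq_succ, Ordinal.add_succ, oscDeriv_succ, oscDeriv_succ, ih]
  | limit β hβ ih =>
      rw [oscDeriv_limit _ _ _ hβ, oscDeriv_limit _ _ _ (Ordinal.isSuccLimit_add α hβ)]
      apply Set.Subset.antisymm
      · refine Set.subset_iInter₂ fun δ hδ => ?_
        rw [← ih δ hδ]
        exact Set.biInter_subset_of_mem (add_lt_add_right hδ α)
      · refine Set.subset_iInter₂ fun γ hγ => ?_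
        obtain ⟨δ, hδ, hγδ⟩ := (Ordinal.lt_add_iff_of_isSuccLimit hβ).1 hγ
        refine (Set.biInter_subset_of_mem hδ).trans ?_
        rw [← ih δ hδ]
        exact oscDeriv_anti f ε H hγδ.le

lemma oscStep_isClosed (hA : IsClosed A) : IsClosed (oscStep f ε A) := by
  refine isClosed_of_closure_subset fun x hx => ?_
  have hxA : x ∈ A := hA.closure_subset_iff.2 (oscStep_subset (f := f) (ε := ε)) hx
  refine ⟨hxA, fun U hU hxU => ?_⟩
  obtain ⟨y, hyU, hy⟩ := mem_closure_iff.1 hx U hU hxU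
  exact hy.2 U hU hyU

lemma oscDeriv_isClosed (hH : IsClosed H) (α : Ordinal) :
    IsClosed (oscDeriv f ε H α) := by
  induction α using Ordinal.limitRecOn with
  | zero => rwa [oscDeriv_zero]
  | add_one α ih => rw [Ordinal.add_one_eq_succ, oscDeriv_succ]; exact oscStep_isClosed ih
  | limit α hα ih =>
      rw [oscDeriv_limit _ _ _ hα]
      exact isClosed_iInter fun β => isClosed_iInter fun hβ => ih β hβ

lemma exists_rank {x : K} {α : Ordinal} (hxH : x ∈ H)
    (hx : x ∉ oscDeriv f ε H α) :
    ∃ σ, Order.succ σ ≤ α ∧ x ∈ oscDeriv f ε H σ ∧ x ∉ oscDeriv f ε H (Order.succ σ) := by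
  set S : Set Ordinal := {γ | x ∉ oscDeriv f ε H γ} with hS
  have hne : S.Nonempty := ⟨α, hx⟩
  have hmem : x ∉ oscDeriv f ε H (sInf S) := csInf_mem hne
  have h0 : sInf S ≠ 0 := by
    intro h
    rw [h, oscDeriv_zero] at hmem
    exact hmem hxH
  rcases Ordinal.zero_or_succ_or_isSuccLimit (sInf S) with h | ⟨σ, hσ'⟩ | hlim
  · exact absurd h h0
  · have hσ := hσ'.symm
    refine ⟨σ, ?_, ?_, ?_⟩
    · rw [← hσ]; exact csInf_le' hx
    · by_contra h
      have := csInf_le' (show σ ∈ S from h)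
      rw [hσ] at this
      exact (Order.lt_succ σ).not_ge this
    · rw [← hσ]; exact hmem
  · exfalso
    rw [oscDeriv_limit _ _ _ hlim] at hmem
    simp only [Set.mem_iInter, not_forall] at hmem
    obtain ⟨β, hβ, hxβ⟩ := hmem
    exact hβ.not_ge (csInf_le' (show β ∈ S from hxβ))

lemma emptyIndex_le {S : Ordinal → Set K} {α : Ordinal} (h : S α = ∅) :
    emptyIndex S ≤ α := by
  rw [emptyIndex, dif_pos ⟨α, h⟩]; exact csInf_le' h

lemma apply_emptyIndex {S : Ordinal → Set K} (h : ∃ α, S α = ∅) :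
    S (emptyIndex S) = ∅ := by
  rw [emptyIndex, dif_pos h]; exact csInf_mem h

lemma emptyIndex_of_not {S : Ordinal → Set K} (h : ¬ ∃ α, S α = ∅) :
    emptyIndex S = (Cardinal.aleph 1).ord := by
  rw [emptyIndex, dif_neg h]

lemma nonempty_of_lt_emptyIndex {S : Ordinal → Set K} {γ : Ordinal}
    (hγ : γ < emptyIndex S) (h : ∃ α, S α = ∅) : (S γ).Nonempty := by
  rw [emptyIndex, dif_pos h] at hγ
  rw [Set.nonempty_iff_ne_empty]
  intro hc
  exact hγ.not_ge (csInf_le' hc)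


lemma claimM {f g : K → ℝ} {ε : ℝ} {H : Set K} (hH : IsClosed H) :
    ∀ (ν α β : Ordinal), α ♯ β = ν →
      oscDeriv (f + g) ε H ν ⊆ oscDeriv f (ε/2) H α ∪ oscDeriv g (ε/2) H β := by
  intro ν
  induction ν using Ordinal.induction with
  | _ ν IH =>
    intro α β hνeq x hx
    by_contra hcon
    obtain ⟨hP, hQ⟩ := not_or.1 hcon
    have hxH : x ∈ H := oscDeriv_subset _ _ _ _ hx
    obtain ⟨σ, hσ1, hσ2, hσ3⟩ := exists_rank hxH hP
    obtain ⟨τ, hτ1, hτ2, hτ3⟩ := exists_rank hxH hQ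
    -- extract the neighborhoods with small oscillation
    have hσ4 : ¬ ∀ U : Set K, IsOpen U → x ∈ U →
        ∃ x₁ ∈ U ∩ oscDeriv f (ε/2) H σ, ∃ x₂ ∈ U ∩ oscDeriv f (ε/2) H σ,
          ε/2 ≤ |f x₁ - f x₂| := by
      intro h
      rw [oscDeriv_succ] at hσ3
      exact hσ3 ⟨hσ2, h⟩
    have hτ4 : ¬ ∀ U : Set K, IsOpen U → x ∈ U →
        ∃ x₁ ∈ U ∩ oscDeriv g (ε/2) H τ, ∃ x₂ ∈ U ∩ oscDeriv g (ε/2) H τ,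
          ε/2 ≤ |g x₁ - g x₂| := by
      intro h
      rw [oscDeriv_succ] at hτ3
      exact hτ3 ⟨hτ2, h⟩
    push_neg at hσ4 hτ4
    obtain ⟨U₁, hU₁o, hxU₁, hU₁⟩ := hσ4
    obtain ⟨U₂, hU₂o, hxU₂, hU₂⟩ := hτ4
    -- the good neighborhood
    set U : Set K := U₁ ∩ U₂ ∩ (oscDeriv f (ε/2) H (Order.succ σ))ᶜ ∩
      (oscDeriv g (ε/2) H (Order.succ τ))ᶜ with hUdef
    have hUo : IsOpen U :=
      (((hU₁o.inter hU₂o).inter (oscDeriv_isClosed hH _).isOpen_compl).inter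
        (oscDeriv_isClosed hH _).isOpen_compl)
    have hxU : x ∈ U := ⟨⟨⟨hxU₁, hxU₂⟩, hσ3⟩, hτ3⟩
    set s := σ ♯ τ with hs
    have hs2 : Order.succ (Order.succ s) ≤ ν := by
      rw [← hνeq]
      calc Order.succ (Order.succ s) = Order.succ σ ♯ Order.succ τ := by
            rw [nadd_succ, succ_nadd]
      _ ≤ α ♯ β := nadd_le_nadd hσ1 hτ1
    have hs1lt : Order.succ s < ν := lt_of_lt_of_le (Order.lt_succ _) hs2
    have h1 : oscDeriv (f + g) ε H (Order.succ s) ⊆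
        oscDeriv f (ε/2) H σ ∪ oscDeriv g (ε/2) H (Order.succ τ) :=
      IH _ hs1lt σ (Order.succ τ) (nadd_succ σ τ)
    have h2 : oscDeriv (f + g) ε H (Order.succ s) ⊆
        oscDeriv f (ε/2) H (Order.succ σ) ∪ oscDeriv g (ε/2) H τ :=
      IH _ hs1lt (Order.succ σ) τ (succ_nadd σ τ)
    have hx2 : x ∈ oscDeriv (f + g) ε H (Order.succ (Order.succ s)) :=
      oscDeriv_anti _ _ _ hs2 hx
    rw [oscDeriv_succ] at hx2
    obtain ⟨y₁, hy₁, y₂, hy₂, hosc⟩ := hx2.2 U hUo hxU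
    have hmem : ∀ y, y ∈ U ∩ oscDeriv (f + g) ε H (Order.succ s) →
        y ∈ oscDeriv f (ε/2) H σ ∧ y ∈ oscDeriv g (ε/2) H τ := by
      rintro y ⟨hyU, hyD⟩
      have hyP : y ∉ oscDeriv f (ε/2) H (Order.succ σ) := hyU.1.2
      have hyQ : y ∉ oscDeriv g (ε/2) H (Order.succ τ) := hyU.2
      constructor
      · rcases h1 hyD with h | h
        · exact h
        · exact absurd h hyQ
      · rcases h2 hyD with h | h
        · exact absurd h hyP
        · exact h
    obtain ⟨hy₁P, hy₁Q⟩ := hmem y₁ hy₁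
    obtain ⟨hy₂P, hy₂Q⟩ := hmem y₂ hy₂
    have hf12 : |f y₁ - f y₂| < ε/2 :=
      hU₁ y₁ ⟨hy₁.1.1.1.1, hy₁P⟩ y₂ ⟨hy₂.1.1.1.1, hy₂P⟩
    have hg12 : |g y₁ - g y₂| < ε/2 :=
      hU₂ y₁ ⟨hy₁.1.1.1.2, hy₁Q⟩ y₂ ⟨hy₂.1.1.1.2, hy₂Q⟩
    have hosc' : ε ≤ |(f y₁ + g y₁) - (f y₂ + g y₂)| := hosc
    have habs : |(f y₁ + g y₁) - (f y₂ + g y₂)| ≤ |f y₁ - f y₂| + |g y₁ - g y₂| := by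
      have : (f y₁ + g y₁) - (f y₂ + g y₂) = (f y₁ - f y₂) + (g y₁ - g y₂) := by ring
      rw [this]
      exact abs_add_le _ _
    linarith

end TopAux

section Compactness

universe uo

variable {K : Type*} [TopologicalSpace K] [T2Space K] [CompactSpace K]

lemma betaEps_lt_limit {f : K → ℝ} {ε : ℝ} {L : Ordinal.{uo}}
    (hex : ∃ α : Ordinal.{uo}, oscDeriv f ε (Set.univ : Set K) α = ∅)
    (hL : Order.IsSuccLimit L)
    (hle : betaEpsOn f ε (Set.univ : Set K) ≤ L) :
    betaEpsOn f ε (Set.univ : Set K) < L := by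
  set m : Ordinal.{uo} := betaEpsOn f ε (Set.univ : Set K) with hm
  rcases Ordinal.zero_or_succ_or_isSuccLimit m with h0 | ⟨a, ha'⟩ | hlim
  · rw [h0]; exact hL.pos
  · have ha := ha'.symm
    rcases lt_or_eq_of_le hle with h | h
    · exact h
    · exfalso
      have haL : a < L := by
        rw [← h, ha]; exact Order.lt_succ a
      have h2 := hL.succ_lt haL
      rw [← ha, h] at h2
      exact lt_irrefl _ h2
  · exfalso
    have hSm : oscDeriv f ε Set.univ m = ∅ := apply_emptyIndex hex
    haveI : Nonempty {β : Ordinal.{uo} // β < m} := ⟨⟨0, hlim.pos⟩⟩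
    have hdir : Directed (· ⊇ ·)
        (fun i : {β : Ordinal.{uo} // β < m} => oscDeriv f ε Set.univ i.1) := by
      intro i j
      rcases le_total i.1 j.1 with h | h
      · exact ⟨j, oscDeriv_anti f ε _ h, subset_rfl⟩
      · exact ⟨i, subset_rfl, oscDeriv_anti f ε _ h⟩
    have hne := IsCompact.nonempty_iInter_of_directed_nonempty_isCompact_isClosed _ hdir
      (fun i => nonempty_of_lt_emptyIndex i.2 hex)
      (fun i => (oscDeriv_isClosed isClosed_univ _).isCompact)
      (fun i => oscDeriv_isClosed isClosed_univ _)
    obtain ⟨z, hz⟩ := hne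
    have hzm : z ∈ oscDeriv f ε Set.univ m := by
      rw [oscDeriv_limit f ε Set.univ hlim]
      exact Set.mem_iInter₂.2 fun γ hγ => Set.mem_iInter.1 hz ⟨γ, hγ⟩
    rw [hSm] at hzm
    exact hzm

end Compactness

section BetaAux

variable {K : Type*} [TopologicalSpace K]

instance : Nonempty {e : ℝ // 0 < e} := ⟨⟨1, one_pos⟩⟩

lemma betaEps_le_beta {f : K → ℝ} {ε : ℝ} (hε : 0 < ε) :
    betaEpsOn f ε Set.univ ≤ beta f :=
  le_ciSup (Ordinal.bddAbove_range _) (⟨ε, hε⟩ : {e : ℝ // 0 < e})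

lemma beta_le_of_forall {f : K → ℝ} {c : Ordinal}
    (h : ∀ ε : ℝ, 0 < ε → betaEpsOn f ε Set.univ ≤ c) : beta f ≤ c :=
  ciSup_le fun e => h e.1 e.2

universe ub in
lemma exists_empty_of_lt_omega1 {f : K → ℝ} {ε : ℝ}
    (h : betaEpsOn f ε (Set.univ : Set K) < (Cardinal.aleph 1 : Cardinal.{ub}).ord) :
    ∃ α : Ordinal.{ub}, oscDeriv f ε (Set.univ : Set K) α = ∅ := by
  by_contra hc
  have h2 : betaEpsOn f ε (Set.univ : Set K) = (Cardinal.aleph 1).ord :=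
    emptyIndex_of_not hc
  rw [h2] at h
  exact lt_irrefl _ h

end BetaAux

section OrdinalAux
open Ordinal


lemma keylem {e : Ordinal} (NAe : ∀ {r s : Ordinal}, r < ω ^ e → s < ω ^ e → r ♯ s < ω ^ e)
    {γ : Ordinal}
    (IH : ∀ γ' < γ, ∀ (qa qb : ℕ) (ra rb : Ordinal), ra < ω ^ e → rb < ω ^ e →
      γ' = (ω ^ e * qa + ra) ♯ (ω ^ e * qb + rb) →
      γ' ≤ ω ^ e * ((qa + qb : ℕ) : Ordinal) + (ra ♯ rb))
    (qa qb : ℕ) (ra rb : Ordinal) (hra : ra < ω ^ e) (hrb : rb < ω ^ e)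
    (hγ : γ = (ω ^ e * qa + ra) ♯ (ω ^ e * qb + rb)) :
    ∀ x < ω ^ e * qa + ra,
      x ♯ (ω ^ e * qb + rb) < ω ^ e * ((qa + qb : ℕ) : Ordinal) + (ra ♯ rb) := by
  have hpow : (0:Ordinal) < ω ^ e := opow_pos e omega0_pos
  intro x hx
  -- decompose x
  have hr' : x % ω ^ e < ω ^ e := Ordinal.mod_lt x hpow.ne'
  have hxlt : x < ω ^ e * (↑qa + 1) := by
    calc x < ω ^ e * qa + ra := hx
    _ < ω ^ e * qa + ω ^ e := add_lt_add_right hra _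
    _ = ω ^ e * (↑qa + 1) := by rw [mul_add_one]
  have hq' : x / ω ^ e < (qa:Ordinal) + 1 := (Ordinal.div_lt hpow.ne').2 hxlt
  have hq'ω : x / ω ^ e < ω := hq'.trans_le (by
    rw [← Nat.cast_one, ← Nat.cast_add]
    exact (nat_lt_omega0 _).le)
  obtain ⟨k, hk⟩ := lt_omega0.1 hq'ω
  have hkqa : k ≤ qa := by
    rw [hk, ← Nat.cast_one, ← Nat.cast_add, Nat.cast_lt] at hq'
    omega
  have hxeq : x = ω ^ e * (k:Ordinal) + x % ω ^ e := by
    conv_lhs => rw [← Ordinal.div_add_mod x (ω ^ e)]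
    rw [hk]
  have hvlt : x ♯ (ω ^ e * qb + rb) < γ := by
    rw [hγ]; exact nadd_lt_nadd_right hx _
  have hIH := IH _ hvlt k qb (x % ω ^ e) rb hr' hrb (by rw [← hxeq])
  rcases lt_or_eq_of_le hkqa with hlt | rfl
  · calc x ♯ (ω ^ e * qb + rb) ≤ ω ^ e * ((k + qb : ℕ):Ordinal) + (x % ω ^ e ♯ rb) := hIH
    _ < ω ^ e * ((k + qb : ℕ):Ordinal) + ω ^ e := add_lt_add_right (NAe hr' hrb) _
    _ = ω ^ e * ((k + qb : ℕ):Ordinal) + ω ^ e * 1 := by rw [mul_one]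
    _ = ω ^ e * ((k + qb + 1 : ℕ):Ordinal) := by
        rw [← mul_add]; norm_cast
    _ ≤ ω ^ e * ((qa + qb : ℕ):Ordinal) := by
        apply mul_le_mul_right
        rw [Nat.cast_le]; omega
    _ ≤ ω ^ e * ((qa + qb : ℕ):Ordinal) + (ra ♯ rb) := le_self_add
  · have hrra : x % ω ^ e < ra := by
      have := hx
      rw [hxeq] at this
      exact lt_of_add_lt_add_left this
    calc x ♯ (ω ^ e * qb + rb) ≤ ω ^ e * ((k + qb : ℕ):Ordinal) + (x % ω ^ e ♯ rb) := hIH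
    _ < ω ^ e * ((k + qb : ℕ):Ordinal) + (ra ♯ rb) :=
        add_lt_add_right (nadd_lt_nadd_right hrra _) _

lemma tlem {e : Ordinal} (NAe : ∀ {r s : Ordinal}, r < ω ^ e → s < ω ^ e → r ♯ s < ω ^ e) :
    ∀ γ (qa qb : ℕ) (ra rb : Ordinal), ra < ω ^ e → rb < ω ^ e →
      γ = (ω ^ e * qa + ra) ♯ (ω ^ e * qb + rb) →
      γ ≤ ω ^ e * ((qa + qb : ℕ) : Ordinal) + (ra ♯ rb) := by
  intro γ
  induction γ using Ordinal.induction with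
  | _ γ IH =>
    intro qa qb ra rb hra hrb hγ
    rw [hγ, nadd_le_iff]
    constructor
    · intro x hx
      exact keylem NAe IH qa qb ra rb hra hrb hγ x hx
    · intro y hy
      rw [nadd_comm]
      have h2 := keylem NAe IH qb qa rb ra hrb hra
        (by rw [hγ, nadd_comm]) y hy
      rwa [Nat.add_comm qb qa, nadd_comm rb ra] at h2

/-- Natural addition of two ordinals below `ω ^ δ` stays below `ω ^ δ`. -/
lemma nadd_lt_omega0_opow : ∀ (δ a b : Ordinal), a < ω ^ δ → b < ω ^ δ → a ♯ b < ω ^ δ := by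
  intro δ
  induction δ using Ordinal.induction with
  | _ δ IH =>
    rcases Ordinal.zero_or_succ_or_isSuccLimit δ with rfl | ⟨e, rfl⟩ | hlim
    · intro a b ha hb
      rw [opow_zero, Ordinal.lt_one_iff_zero] at ha hb
      subst ha; subst hb
      rw [nadd_zero, opow_zero]
      exact zero_lt_one
    · intro a b ha hb
      have hpow : (0:Ordinal) < ω ^ e := opow_pos e omega0_pos
      have NAe : ∀ {r s : Ordinal}, r < ω ^ e → s < ω ^ e → r ♯ s < ω ^ e :=
        fun hr hs => IH e (Order.lt_succ e) _ _ hr hs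
      rw [opow_succ, lt_mul_iff_of_isSuccLimit isSuccLimit_omega0] at ha hb
      obtain ⟨ca, hca, haa⟩ := ha
      obtain ⟨cb, hcb, hbb⟩ := hb
      obtain ⟨ma, rfl⟩ := lt_omega0.1 hca
      obtain ⟨mb, rfl⟩ := lt_omega0.1 hcb
      -- decompose a and b
      have hqa : a / ω ^ e < (ma:Ordinal) := (Ordinal.div_lt hpow.ne').2 haa
      have hqb : b / ω ^ e < (mb:Ordinal) := (Ordinal.div_lt hpow.ne').2 hbb
      obtain ⟨ka, hka⟩ := lt_omega0.1 (hqa.trans (nat_lt_omega0 _))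
      obtain ⟨kb, hkb⟩ := lt_omega0.1 (hqb.trans (nat_lt_omega0 _))
      have hra : a % ω ^ e < ω ^ e := Ordinal.mod_lt a hpow.ne'
      have hrb : b % ω ^ e < ω ^ e := Ordinal.mod_lt b hpow.ne'
      have haeq : a = ω ^ e * (ka:Ordinal) + a % ω ^ e := by
        conv_lhs => rw [← Ordinal.div_add_mod a (ω ^ e)]
        rw [hka]
      have hbeq : b = ω ^ e * (kb:Ordinal) + b % ω ^ e := by
        conv_lhs => rw [← Ordinal.div_add_mod b (ω ^ e)]
        rw [hkb]
      have := tlem NAe (a ♯ b) ka kb (a % ω ^ e) (b % ω ^ e) hra hrb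
        (by rw [← haeq, ← hbeq])
      calc a ♯ b ≤ ω ^ e * ((ka + kb : ℕ):Ordinal) + (a % ω ^ e ♯ b % ω ^ e) := this
      _ < ω ^ e * ((ka + kb : ℕ):Ordinal) + ω ^ e := add_lt_add_right (NAe hra hrb) _
      _ = ω ^ e * ((ka + kb + 1 : ℕ):Ordinal) := by
          have hc : ((ka + kb + 1 : ℕ):Ordinal) = ((ka + kb : ℕ):Ordinal) + 1 := by
            norm_cast
          rw [hc, mul_add, mul_one]
      _ < ω ^ e * ω := by
          rw [mul_lt_mul_iff_right₀ hpow]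
          exact nat_lt_omega0 _
      _ = ω ^ Order.succ e := (opow_succ ω e).symm
    · intro a b ha hb
      obtain ⟨c₁, hc₁, hac⟩ := (lt_opow_of_isSuccLimit omega0_ne_zero hlim).1 ha
      obtain ⟨c₂, hc₂, hbc⟩ := (lt_opow_of_isSuccLimit omega0_ne_zero hlim).1 hb
      have hmax : max c₁ c₂ < δ := max_lt hc₁ hc₂
      have ha' : a < ω ^ max c₁ c₂ :=
        hac.trans_le (opow_le_opow_right omega0_pos (le_max_left _ _))
      have hb' : b < ω ^ max c₁ c₂ :=
        hbc.trans_le (opow_le_opow_right omega0_pos (le_max_right _ _))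
      exact lt_trans (IH _ hmax a b ha' hb')
        ((opow_lt_opow_iff_right one_lt_omega0).2 hmax)



lemma opow_omega0_lt_omega1 : ∀ ξ : Ordinal.{u_1}, ξ < (Cardinal.aleph 1).ord →
    ω ^ ξ < (Cardinal.aleph 1).ord := by
  intro ξ
  induction ξ using Ordinal.induction with
  | _ ξ IH =>
    rcases Ordinal.zero_or_succ_or_isSuccLimit ξ with rfl | ⟨e, rfl⟩ | hlim
    · intro _
      rw [opow_zero, Cardinal.lt_ord, Ordinal.card_one]
      exact lt_of_lt_of_le Cardinal.one_lt_aleph0 (Cardinal.aleph0_le_aleph 1)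
    · intro hξ
      have he : e < (Cardinal.aleph 1).ord := lt_trans (Order.lt_succ e) hξ
      rw [opow_succ, Cardinal.lt_ord, Ordinal.card_mul]
      refine Cardinal.mul_lt_of_lt (Cardinal.aleph0_le_aleph 1) ?_ ?_
      · rw [← Cardinal.lt_ord]; exact IH e (Order.lt_succ e) he
      · rw [Ordinal.card_omega0]; exact Cardinal.aleph0_lt_aleph_one
    · intro hξ
      rw [← Ordinal.IsNormal.bsup_eq.{u_1,u_1} (isNormal_opow one_lt_omega0) hlim]
      refine Ordinal.bsup_lt_ord ?_ fun i hi => IH i hi (lt_trans hi hξ)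
      rw [Cardinal.isRegular_aleph_one.cof_eq]
      exact Cardinal.lt_ord.1 hξ

end OrdinalAux

end Auxiliary

theorem statement13 {K : Type*} [MetricSpace K] [CompactSpace K]
    (ξ : Ordinal) (hξ1 : 1 ≤ ξ) (hξ : ξ < (Cardinal.aleph 1).ord) :
    beta (0 : K → ℝ) ≤ Ordinal.omega0 ^ ξ ∧
    (∀ f g : K → ℝ, beta f ≤ Ordinal.omega0 ^ ξ → beta g ≤ Ordinal.omega0 ^ ξ →
      beta (f + g) ≤ Ordinal.omega0 ^ ξ) ∧
    (∀ (c : ℝ) (f : K → ℝ), beta f ≤ Ordinal.omega0 ^ ξ →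
      beta (c • f) ≤ Ordinal.omega0 ^ ξ) ∧
    ∀ (F : ℕ → K → ℝ) (f : K → ℝ), (∀ n, beta (F n) ≤ Ordinal.omega0 ^ ξ) →
      TendstoUniformly F f atTop → beta f ≤ Ordinal.omega0 ^ ξ := by
  have hω1 : Ordinal.omega0 ^ ξ < (Cardinal.aleph 1).ord := opow_omega0_lt_omega1 ξ hξ
  have hpos : (0 : Ordinal) < Ordinal.omega0 ^ ξ := Ordinal.opow_pos ξ Ordinal.omega0_pos
  have hone : (1 : Ordinal) ≤ Ordinal.omega0 ^ ξ := Ordinal.one_le_iff_ne_zero.2 hpos.ne'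
  have hlimωξ : Order.IsSuccLimit (Ordinal.omega0 ^ ξ) :=
    Ordinal.isSuccLimit_opow_left Ordinal.isSuccLimit_omega0 (Ordinal.one_le_iff_ne_zero.1 hξ1)
  -- ZERO
  have hzero : beta (0 : K → ℝ) ≤ Ordinal.omega0 ^ ξ := by
    apply beta_le_of_forall
    intro ε hε
    have h1 : oscDeriv (0 : K → ℝ) ε Set.univ (Order.succ 0) = ∅ := by
      rw [oscDeriv_succ, oscDeriv_zero]
      ext y
      simp only [Set.mem_empty_iff_false, iff_false]
      intro hy
      obtain ⟨y₁, _, y₂, _, hle⟩ := hy.2 Set.univ isOpen_univ (Set.mem_univ y)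
      have hexp : |(0 : K → ℝ) y₁ - (0 : K → ℝ) y₂| = 0 := by simp
      rw [hexp] at hle
      linarith
    refine le_trans (emptyIndex_le h1) ?_
    rw [Ordinal.succ_zero]
    exact hone
  refine ⟨hzero, ?_, ?_, ?_⟩
  -- ADDITION
  · intro f g hf hg
    apply beta_le_of_forall
    intro ε hε
    have hεhalf : 0 < ε / 2 := by linarith
    have haf : betaEpsOn f (ε/2) (Set.univ : Set K) ≤ Ordinal.omega0 ^ ξ :=
      (betaEps_le_beta hεhalf).trans hf
    have hag : betaEpsOn g (ε/2) (Set.univ : Set K) ≤ Ordinal.omega0 ^ ξ :=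
      (betaEps_le_beta hεhalf).trans hg
    have hexf : ∃ α, oscDeriv f (ε/2) (Set.univ : Set K) α = ∅ :=
      exists_empty_of_lt_omega1 (lt_of_le_of_lt haf hω1)
    have hexg : ∃ α, oscDeriv g (ε/2) (Set.univ : Set K) α = ∅ :=
      exists_empty_of_lt_omega1 (lt_of_le_of_lt hag hω1)
    have hsf : betaEpsOn f (ε/2) (Set.univ : Set K) < Ordinal.omega0 ^ ξ :=
      betaEps_lt_limit hexf hlimωξ haf
    have hsg : betaEpsOn g (ε/2) (Set.univ : Set K) < Ordinal.omega0 ^ ξ :=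
      betaEps_lt_limit hexg hlimωξ hag
    have hPempty : oscDeriv f (ε/2) (Set.univ : Set K)
        (betaEpsOn f (ε/2) Set.univ) = ∅ := apply_emptyIndex hexf
    have hQempty : oscDeriv g (ε/2) (Set.univ : Set K)
        (betaEpsOn g (ε/2) Set.univ) = ∅ := apply_emptyIndex hexg
    have hsub := claimM (f := f) (g := g) (ε := ε) isClosed_univ
      (betaEpsOn f (ε/2) Set.univ ♯ betaEpsOn g (ε/2) Set.univ)
      (betaEpsOn f (ε/2) Set.univ) (betaEpsOn g (ε/2) Set.univ) rfl
    rw [hPempty, hQempty, Set.empty_union] at hsub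
    have hDempty : oscDeriv (f + g) ε (Set.univ : Set K)
        (betaEpsOn f (ε/2) Set.univ ♯ betaEpsOn g (ε/2) Set.univ) = ∅ :=
      Set.eq_empty_iff_forall_notMem.2 fun z hz => (hsub hz).elim
    refine le_trans (emptyIndex_le hDempty) ?_
    exact (nadd_lt_omega0_opow ξ _ _ hsf hsg).le
  -- SCALAR MULTIPLICATION
  · intro c f hf
    rcases eq_or_ne c 0 with rfl | hc
    · rw [zero_smul]
      exact hzero
    · apply beta_le_of_forall
      intro ε hε
      have hcpos : 0 < |c| := abs_pos.2 hc
      have hεc : 0 < ε / |c| := div_pos hε hcpos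
      have haf : betaEpsOn f (ε/|c|) (Set.univ : Set K) ≤ Ordinal.omega0 ^ ξ :=
        (betaEps_le_beta hεc).trans hf
      have hexf : ∃ α, oscDeriv f (ε/|c|) (Set.univ : Set K) α = ∅ :=
        exists_empty_of_lt_omega1 (lt_of_le_of_lt haf hω1)
      have hcmp : ∀ x y : K, ε ≤ |(c • f) x - (c • f) y| → ε / |c| ≤ |f x - f y| := by
        intro x y h
        have hcf : (c • f) x - (c • f) y = c * (f x - f y) := by
          simp only [Pi.smul_apply, _root_.smul_eq_mul]; ring
        rw [hcf, abs_mul] at h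
        rw [div_le_iff₀ hcpos]
        linarith [h, mul_comm (|c|) (|f x - f y|)]
      have hsub : oscDeriv (c • f) ε (Set.univ : Set K) (betaEpsOn f (ε/|c|) Set.univ) ⊆
          oscDeriv f (ε/|c|) (Set.univ : Set K) (betaEpsOn f (ε/|c|) Set.univ) :=
        oscDeriv_mono hcmp subset_rfl _
      have hempty : oscDeriv (c • f) ε (Set.univ : Set K)
          (betaEpsOn f (ε/|c|) Set.univ) = ∅ := by
        rw [← Set.subset_empty_iff]
        rw [← apply_emptyIndex hexf]
        exact hsub
      exact le_trans (emptyIndex_le hempty) haf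
  -- UNIFORM LIMIT
  · intro F f hF hFf
    apply beta_le_of_forall
    intro ε hε
    have hε4 : 0 < ε / 4 := by linarith
    have := Metric.tendstoUniformly_iff.1 hFf (ε/4) hε4
    obtain ⟨n, hn⟩ := this.exists
    have hcmp : ∀ x y : K, ε ≤ |f x - f y| → ε / 2 ≤ |F n x - F n y| := by
      intro x y h
      have h1 : |f x - F n x| < ε/4 := by
        have := hn x; rwa [Real.dist_eq] at this
      have h2 : |f y - F n y| < ε/4 := by
        have := hn y; rwa [Real.dist_eq] at this
      have h3 : |f x - f y| ≤ |f x - F n x| + |F n x - F n y| + |F n y - f y| := by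
        have : f x - f y = (f x - F n x) + (F n x - F n y) + (F n y - f y) := by ring
        rw [this]
        exact (abs_add_le _ _).trans (add_le_add_left (abs_add_le _ _) _)
      have h4 : |F n y - f y| = |f y - F n y| := abs_sub_comm _ _
      linarith
    have hε2 : 0 < ε / 2 := by linarith
    have haf : betaEpsOn (F n) (ε/2) (Set.univ : Set K) ≤ Ordinal.omega0 ^ ξ :=
      (betaEps_le_beta hε2).trans (hF n)
    have hexf : ∃ α, oscDeriv (F n) (ε/2) (Set.univ : Set K) α = ∅ :=
      exists_empty_of_lt_omega1 (lt_of_le_of_lt haf hω1)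
    have hsub : oscDeriv f ε (Set.univ : Set K) (betaEpsOn (F n) (ε/2) Set.univ) ⊆
        oscDeriv (F n) (ε/2) (Set.univ : Set K) (betaEpsOn (F n) (ε/2) Set.univ) :=
      oscDeriv_mono hcmp subset_rfl _
    have hempty : oscDeriv f ε (Set.univ : Set K)
        (betaEpsOn (F n) (ε/2) Set.univ) = ∅ := by
      rw [← Set.subset_empty_iff, ← apply_emptyIndex hexf]
      exact hsub
    exact le_trans (emptyIndex_le hempty) haf
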